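/- arXiv:0704.0164 — 4 statements merged into one kernel-verified Lean document; each statement's English description precedes it below -/
import Mathlib

section
/- Let n ≥ 3 and let A be an invertible real n×n matrix such that for every x ∈ ℝⁿ and all indices i, j, k one has (Ax)_i·(A_{kj} − A_{jk}) + (Ax)_j·(A_{ik} − A_{ki}) + (Ax)_k·(A_{ji} − A_{ij}) = 0. Then A is symmetric, i.e. Aᵀ = A. -/
/-! At a point where `ω₁ = dx_i`, the coefficient of `dx_i ∧ dx_j ∧ dx_k` in `ω₁ ∧ dω₁` reduces to
`A_{kj} - A_{jk}`. Invertibility of `A` makes every covector `dx_i` a value of `ω₁`, and `n ≥ 3`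
provides, for any `j, k`, an index `i` distinct from both. -/

open Matrix

/-- Up to sign, the coefficient of `dx_i ∧ dx_j ∧ dx_k` in `ω₁ ∧ dω₁` at a point where
`ω₁ = Σ y_i dx_i`. -/
def integrabilityCoeff {ι R : Type*} [Ring R] (A : Matrix ι ι R) (y : ι → R) (i j k : ι) : R :=
  y i * (A k j - A j k) + y j * (A i k - A k i) + y k * (A j i - A i j)

theorem integrabilityCoeff_single {ι R : Type*} [DecidableEq ι] [Ring R] (A : Matrix ι ι R)
    {i j k : ι} (hij : i ≠ j) (hik : i ≠ k) :
    integrabilityCoeff A (Pi.single i 1) i j k = A k j - A j k := by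
  simp [integrabilityCoeff, Pi.single_eq_of_ne' hij, Pi.single_eq_of_ne' hik]

/-- If `A` is an invertible real `n × n` matrix (`n ≥ 3`) satisfying the
coordinate form of the Frobenius integrability condition for the linear one-form
`ω₁ = Σ A_{ij} x_j dx_i`, then `A` is symmetric. -/
theorem integrable_linear_one_form_symmetric
    (n : ℕ) (hn : 3 ≤ n) (A : Matrix (Fin n) (Fin n) ℝ) (hA : IsUnit A.det)
    (hint : ∀ (x : Fin n → ℝ) (i j k : Fin n),
      A.mulVec x i * (A k j - A j k) + A.mulVec x j * (A i k - A k i) +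
        A.mulVec x k * (A j i - A i j) = 0) :
    Aᵀ = A := by
  ext j k
  obtain ⟨i, hij, hik⟩ := ENat.exists_ne_ne_of_three_le (by simpa using hn) j k
  obtain ⟨x, hx⟩ := mulVec_surjective_iff_isUnit.2 ((isUnit_iff_isUnit_det A).2 hA) (Pi.single i 1)
  have hcoeff : integrabilityCoeff A (A *ᵥ x) i j k = 0 := hint x i j k
  rw [hx, integrabilityCoeff_single A hij hik] at hcoeff
  exact sub_eq_zero.1 hcoeff
end

section
/- Let h : ℝⁿ → ℝⁿ be a C¹ map with h(0) = 0, and suppose that for every x ∈ ℝⁿ and all indices i, j, k one has h_i(x)·(∂_j h_k(x) − ∂_k h_j(x)) + h_j(x)·(∂_k h_i(x) − ∂_i h_k(x)) + h_k(x)·(∂_i h_j(x) − ∂_j h_i(x)) = 0. Define the matrix A by A_{ij} = ∂_j h_i(0). Then for every x ∈ ℝⁿ and all i, j, k one has (Ax)_i·(A_{kj} − A_{jk}) + (Ax)_j·(A_{ik} − A_{ki}) + (Ax)_k·(A_{ji} − A_{ij}) = 0. -/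
/-!
Along the ray `t ↦ t • x` the condition is homogeneous of degree one in `h`, so it still holds
after dividing by `t`. As `t → 0`, `t⁻¹ • h (t • x)` tends to `Dh(0) x` because `h 0 = 0`, and
the Jacobian at `t • x` tends to `Dh(0)` because `h` is `C¹`; the limit is the condition for
the linear part.
-/

open Filter Topology

variable {𝕜 ι : Type*}

/-- The coefficient of `dxᵢ ∧ dxⱼ ∧ dxₖ` in `ω ∧ dω` for `ω = Σ vᵢ dxᵢ`, where `M k j` stands
for `∂ⱼ vₖ`. -/
def frobeniusCoeff [Ring 𝕜] (v : ι → 𝕜) (M : Matrix ι ι 𝕜) (i j k : ι) : 𝕜 :=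
  v i * (M k j - M j k) + v j * (M i k - M k i) + v k * (M j i - M i j)

lemma frobeniusCoeff_smul [CommRing 𝕜] (c : 𝕜) (v : ι → 𝕜) (M : Matrix ι ι 𝕜) (i j k : ι) :
    frobeniusCoeff (c • v) M i j k = c * frobeniusCoeff v M i j k := by
  simp only [frobeniusCoeff, Pi.smul_apply, smul_eq_mul]
  ring

lemma continuous_frobeniusCoeff [Ring 𝕜] [TopologicalSpace 𝕜] [IsTopologicalRing 𝕜]
    (i j k : ι) : Continuous fun p : (ι → 𝕜) × Matrix ι ι 𝕜 => frobeniusCoeff p.1 p.2 i j k := by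
  unfold frobeniusCoeff
  fun_prop

section NormedField

variable [NontriviallyNormedField 𝕜]

lemma tendsto_inv_smul_apply_smul_of_hasFDerivAt {E F : Type*}
    [NormedAddCommGroup E] [NormedSpace 𝕜 E] [NormedAddCommGroup F] [NormedSpace 𝕜 F]
    {f : E → F} {L : E →L[𝕜] F} (hf : HasFDerivAt f L 0) (hf0 : f 0 = 0) (x : E) :
    Tendsto (fun t : 𝕜 => t⁻¹ • f (t • x)) (𝓝[≠] 0) (𝓝 (L x)) := by
  have hray : HasDerivAt (fun t : 𝕜 => f (t • x)) (L x) 0 := by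
    have hline : HasDerivAt (fun t : 𝕜 => t • x) x 0 := by
      simpa using (hasDerivAt_id (0 : 𝕜)).smul_const x
    exact (zero_smul 𝕜 x ▸ hf).comp_hasDerivAt 0 hline
  simpa [slope_fun_def, hf0] using hasDerivAt_iff_tendsto_slope.mp hray

variable [Fintype ι] [DecidableEq ι]

lemma continuous_toMatrix'_coe :
    Continuous fun L : (ι → 𝕜) →L[𝕜] (ι → 𝕜) => LinearMap.toMatrix' (L : (ι → 𝕜) →ₗ[𝕜] ι → 𝕜) :=
  continuous_pi fun k => continuous_pi fun j => by
    simp only [LinearMap.toMatrix'_apply, ContinuousLinearMap.coe_coe]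
    fun_prop

theorem frobeniusCoeff_fderiv_zero_eq_zero {h : (ι → 𝕜) → ι → 𝕜} {i j k : ι} (h0 : h 0 = 0)
    (hd : DifferentiableAt 𝕜 h 0) (hcont : ContinuousAt (fderiv 𝕜 h) 0)
    (hint : ∀ x, frobeniusCoeff (h x)
      (LinearMap.toMatrix' (fderiv 𝕜 h x : (ι → 𝕜) →ₗ[𝕜] ι → 𝕜)) i j k = 0)
    (x : ι → 𝕜) :
    frobeniusCoeff (fderiv 𝕜 h 0 x)
      (LinearMap.toMatrix' (fderiv 𝕜 h 0 : (ι → 𝕜) →ₗ[𝕜] ι → 𝕜)) i j k = 0 := by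
  have hray := tendsto_inv_smul_apply_smul_of_hasFDerivAt hd.hasFDerivAt h0 x
  have hjac : Tendsto
      (fun t : 𝕜 => LinearMap.toMatrix' (fderiv 𝕜 h (t • x) : (ι → 𝕜) →ₗ[𝕜] ι → 𝕜))
      (𝓝[≠] 0) (𝓝 (LinearMap.toMatrix' (fderiv 𝕜 h 0 : (ι → 𝕜) →ₗ[𝕜] ι → 𝕜))) := by
    have hsmul : Tendsto (fun t : 𝕜 => t • x) (𝓝[≠] 0) (𝓝 0) :=
      (Continuous.tendsto' (by fun_prop) 0 0 (zero_smul 𝕜 x)).mono_left nhdsWithin_le_nhds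
    exact continuous_toMatrix'_coe.continuousAt.tendsto.comp (hcont.tendsto.comp hsmul)
  have hlim := ((continuous_frobeniusCoeff i j k).tendsto _).comp (hray.prodMk_nhds hjac)
  refine tendsto_nhds_unique hlim (tendsto_const_nhds.congr fun t => ?_)
  simp only [Function.comp_apply, frobeniusCoeff_smul, hint, mul_zero]

end NormedField

/-- If `ω = Σ hᵢ dxⁱ` is a `C¹` one-form on `ℝⁿ` vanishing at `0` that
satisfies the coordinate form of the Frobenius integrability condition `ω ∧ dω = 0`,
then its linear part at `0`, given by the matrix `A_{ij} = ∂_j h_i(0)`, satisfies the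
integrability condition of the linearized one-form `ω₁ = Σ A_{ij} x_j dx_i`. -/
theorem integrability_of_linear_part
    (n : ℕ) (h : (Fin n → ℝ) → (Fin n → ℝ))
    (hC1 : ContDiff ℝ 1 h) (h0 : h 0 = 0)
    (hint : ∀ (x : Fin n → ℝ) (i j k : Fin n),
      h x i * (fderiv ℝ h x (Pi.single j 1) k - fderiv ℝ h x (Pi.single k 1) j) +
      h x j * (fderiv ℝ h x (Pi.single k 1) i - fderiv ℝ h x (Pi.single i 1) k) +
      h x k * (fderiv ℝ h x (Pi.single i 1) j - fderiv ℝ h x (Pi.single j 1) i) = 0)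
    (A : Matrix (Fin n) (Fin n) ℝ)
    (hA : ∀ i j : Fin n, A i j = fderiv ℝ h 0 (Pi.single j 1) i) :
    ∀ (x : Fin n → ℝ) (i j k : Fin n),
      A.mulVec x i * (A k j - A j k) + A.mulVec x j * (A i k - A k i) +
        A.mulVec x k * (A j i - A i j) = 0 := by
  intro x i j k
  obtain rfl : A = LinearMap.toMatrix' (fderiv ℝ h 0 : _ →ₗ[ℝ] _) :=
    Matrix.ext fun i j => (hA i j).trans (LinearMap.toMatrix'_apply _ i j).symm
  rw [LinearMap.toMatrix'_mulVec]
  exact frobeniusCoeff_fderiv_zero_eq_zero h0 (hC1.differentiable one_ne_zero 0)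
    (hC1.continuous_fderiv one_ne_zero).continuousAt
    (fun y => by
      simpa only [frobeniusCoeff, LinearMap.toMatrix'_apply, ContinuousLinearMap.coe_coe]
        using hint y i j k) x
end

section
/- Let n ≥ 1 and 1 ≤ l ≤ n−1, and let f be the Morse quadratic of index l on ℝⁿ. Then for every real number c > 0, the level set f⁻¹(c) is homeomorphic to the product B^l × S^{n−l−1} of the open unit ball in ℝ^l with the unit sphere in ℝ^{n−l}. -/
/-!
Splitting `ℝⁿ = ℝˡ × ℝⁿ⁻ˡ` turns the level set `f = c` into the hyperboloid
`‖y‖² - ‖x‖² = c`. As `c > 0`, `y ≠ 0` on it, and `(x, y) ↦ (x, y / ‖y‖)` is a homeomorphism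
onto `ℝˡ × Sⁿ⁻ˡ⁻¹` with inverse `(x, u) ↦ (x, √(c + ‖x‖²) • u)`; finally `ℝˡ ≅ Bˡ`.
-/

open Metric

/-- The Morse quadratic of index `l` on `ℝⁿ`:
`f(x) = -x₁² - ⋯ - x_l² + x_{l+1}² + ⋯ + x_n²`. -/
noncomputable def morseQuadratic (n l : ℕ) : EuclideanSpace ℝ (Fin n) → ℝ :=
  fun x => ∑ i : Fin n, (if (i : ℕ) < l then -(x i) ^ 2 else (x i) ^ 2)

section Hyperboloid

variable {E F : Type*} [NormedAddCommGroup E] [NormedAddCommGroup F]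

theorem norm_snd_pos_of_sq_norm_sub_sq_norm_eq {c : ℝ} (hc : 0 < c) {p : E × F}
    (hp : ‖p.2‖ ^ 2 - ‖p.1‖ ^ 2 = c) : 0 < ‖p.2‖ := by
  nlinarith [norm_nonneg p.1, norm_nonneg p.2]

variable [NormedSpace ℝ E] [NormedSpace ℝ F]

noncomputable def hyperboloidHomeomorphProdSphere (c : ℝ) (hc : 0 < c) :
    {p : E × F | ‖p.2‖ ^ 2 - ‖p.1‖ ^ 2 = c} ≃ₜ E × sphere (0 : F) 1 where
  toFun p :=
    have := norm_snd_pos_of_sq_norm_sub_sq_norm_eq hc p.2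
    (p.1.1, ⟨‖p.1.2‖⁻¹ • p.1.2, by simp [norm_smul, this.ne']⟩)
  invFun q := ⟨(q.1, √(c + ‖q.1‖ ^ 2) • (q.2 : F)), by
    simp [norm_smul, Real.sq_sqrt (by positivity : 0 ≤ c + ‖q.1‖ ^ 2)]⟩
  left_inv := by
    rintro ⟨⟨x, y⟩, hp⟩
    have hy := norm_snd_pos_of_sq_norm_sub_sq_norm_eq hc hp
    have hy_sq : c + ‖x‖ ^ 2 = ‖y‖ ^ 2 := by simp only [Set.mem_ofPred_eq] at hp; linarith
    ext <;> simp [hy_sq, smul_smul, hy.ne']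
  right_inv := by
    rintro ⟨x, u, hu⟩
    have hs : 0 < √(c + ‖x‖ ^ 2) := by positivity
    rw [mem_sphere_zero_iff_norm] at hu
    ext <;> simp [norm_smul, hu, smul_smul, hs.ne', abs_of_pos hs]
  continuous_toFun := by
    simp only
    fun_prop (disch := exact fun p => (norm_snd_pos_of_sq_norm_sub_sq_norm_eq hc p.2).ne')
  continuous_invFun := by fun_prop

end Hyperboloid

theorem morseQuadratic_add_apply (l m : ℕ) (x : EuclideanSpace ℝ (Fin (l + m))) :
    morseQuadratic (l + m) l x =
      ‖(EuclideanSpace.finAddEquivProd x).2‖ ^ 2 - ‖(EuclideanSpace.finAddEquivProd x).1‖ ^ 2 := by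
  simp [morseQuadratic, Fin.sum_univ_add, EuclideanSpace.real_norm_sq_eq, neg_add_eq_sub]

noncomputable def morseLevelHomeomorphHyperboloid (l m : ℕ) (c : ℝ) :
    (morseQuadratic (l + m) l ⁻¹' {c}) ≃ₜ
      {p : EuclideanSpace ℝ (Fin l) × EuclideanSpace ℝ (Fin m) | ‖p.2‖ ^ 2 - ‖p.1‖ ^ 2 = c} :=
  EuclideanSpace.finAddEquivProd.toHomeomorph.subtype fun x => by
    simp [morseQuadratic_add_apply]

theorem morse_level_pos_homeomorph_ball_prod_sphere_general
    (n l : ℕ) (hl2 : l ≤ n - 1) (c : ℝ) (hc : 0 < c) :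
    Nonempty ((morseQuadratic n l ⁻¹' {c}) ≃ₜ
      (Metric.ball (0 : EuclideanSpace ℝ (Fin l)) 1) ×
        (Metric.sphere (0 : EuclideanSpace ℝ (Fin (n - l))) 1)) := by
  obtain ⟨m, rfl⟩ := Nat.exists_eq_add_of_le (hl2.trans (Nat.sub_le n 1))
  rw [Nat.add_sub_cancel_left]
  exact ⟨(morseLevelHomeomorphHyperboloid l m c).trans <|
    (hyperboloidHomeomorphProdSphere c hc).trans <|
      Homeomorph.unitBall.prodCongr (Homeomorph.refl _)⟩

/-- for `c > 0`, the level set `f⁻¹(c)` of the Morse quadratic of index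
`l` (`1 ≤ l ≤ n-1`) is homeomorphic to `B^l × S^{n-l-1}`. -/
theorem morse_level_pos_homeomorph_ball_prod_sphere
    (n l : ℕ) (hn : 1 ≤ n) (hl1 : 1 ≤ l) (hl2 : l ≤ n - 1) (c : ℝ) (hc : 0 < c) :
    Nonempty ((morseQuadratic n l ⁻¹' {c}) ≃ₜ
      (Metric.ball (0 : EuclideanSpace ℝ (Fin l)) 1) ×
        (Metric.sphere (0 : EuclideanSpace ℝ (Fin (n - l))) 1)) :=
  morse_level_pos_homeomorph_ball_prod_sphere_general n l hl2 c hc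
end

section
/- Let n ≥ 1, let f : ℝⁿ → ℝ be a continuous convex function, let p ∈ ℝⁿ and c ∈ ℝ with f(p) < c, and suppose the sublevel set K = {x ∈ ℝⁿ : f(x) ≤ c} is compact. Then the level set f⁻¹({c}) is homeomorphic to the unit sphere S^{n−1} in ℝⁿ. -/
/-!
The sublevel set `K = {f ≤ c}` is a compact convex set containing `p` in its interior, so
Mathlib's gauge rescaling gives a homeomorphism of `ℝⁿ` carrying `frontier K` onto the unit
sphere. It remains to see that `frontier K` is exactly the level set `f⁻¹(c)`: if `f x = c`,
then on the ray from `p` through `x` convexity forces `f > c` beyond `x`, so `x` is a limit of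
points outside `K`.
-/

open Set AffineMap Filter Topology

section ConvexRay

variable {E : Type*} [AddCommGroup E] [Module ℝ E] {f : E → ℝ}

theorem mem_openSegment_lineMap_of_one_lt (p x : E) {t : ℝ} (ht : 1 < t) :
    x ∈ openSegment ℝ p (lineMap p x t) := by
  nth_rw 1 [← lineMap_apply_zero (k := ℝ) p x, ← image_openSegment]
  exact ⟨1, Ioo_subset_openSegment ⟨zero_lt_one, ht⟩, lineMap_apply_one p x⟩

theorem ConvexOn.lt_lineMap_of_lt (hf : ConvexOn ℝ univ f) {p x : E}
    (hpx : f p < f x) {t : ℝ} (ht : 1 < t) : f x < f (lineMap p x t) :=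
  hf.lt_right_of_left_lt (mem_univ _) (mem_univ _) (mem_openSegment_lineMap_of_one_lt p x ht) hpx

variable [TopologicalSpace E] [IsTopologicalAddGroup E] [ContinuousSMul ℝ E]

theorem ConvexOn.frontier_setOf_le_eq (hf : ConvexOn ℝ univ f) (hcont : Continuous f) {p : E}
    {c : ℝ} (hpc : f p < c) : frontier {x | f x ≤ c} = f ⁻¹' {c} := by
  refine (frontier_le_subset_eq hcont continuous_const).antisymm fun x (hx : f x = c) ↦ ?_
  rw [frontier_eq_closure_inter_closure]
  refine ⟨subset_closure hx.le, ?_⟩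
  have hray : Tendsto (lineMap p x) (𝓝[>] (1 : ℝ)) (𝓝 x) := by
    simpa only [lineMap_apply_one] using
      (lineMap_continuous (p := p) (q := x)).tendsto (1 : ℝ) |>.mono_left nhdsWithin_le_nhds
  refine mem_closure_of_tendsto hray (eventually_nhdsWithin_of_forall fun t (ht : 1 < t) ↦ ?_)
  simpa only [mem_compl_iff, mem_ofPred_eq, not_le, ← hx] using
    hf.lt_lineMap_of_lt (hpc.trans_eq hx.symm) ht

end ConvexRay

theorem convex_level_set_homeomorph_sphere_general
    (n : ℕ) (f : EuclideanSpace ℝ (Fin n) → ℝ)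
    (hcont : Continuous f) (hconv : ConvexOn ℝ Set.univ f)
    (p : EuclideanSpace ℝ (Fin n)) (c : ℝ) (hpc : f p < c)
    (hcpt : IsCompact {x : EuclideanSpace ℝ (Fin n) | f x ≤ c}) :
    Nonempty ((f ⁻¹' {c}) ≃ₜ (Metric.sphere (0 : EuclideanSpace ℝ (Fin n)) 1)) := by
  have hconvex : Convex ℝ {x | f x ≤ c} := by simpa using hconv.convex_le c
  have hp : p ∈ interior {x | f x ≤ c} := lt_subset_interior_le hcont continuous_const hpc
  obtain ⟨h, -, -, hfrontier⟩ := exists_homeomorph_image_interior_closure_frontier_eq_unitBall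
    hconvex ⟨p, hp⟩ hcpt.isBounded
  rw [hconv.frontier_setOf_le_eq hcont hpc] at hfrontier
  exact ⟨(h.image _).trans (Homeomorph.setCongr hfrontier)⟩

/-- if `f : ℝⁿ → ℝ` is continuous and convex, `f(p) < c`, and the
sublevel set `{f ≤ c}` is compact, then the level set `f⁻¹(c)` is homeomorphic to the
unit sphere `S^{n-1}` of `ℝⁿ`. -/
theorem convex_level_set_homeomorph_sphere
    (n : ℕ) (hn : 1 ≤ n) (f : EuclideanSpace ℝ (Fin n) → ℝ)
    (hcont : Continuous f) (hconv : ConvexOn ℝ Set.univ f)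
    (p : EuclideanSpace ℝ (Fin n)) (c : ℝ) (hpc : f p < c)
    (hcpt : IsCompact {x : EuclideanSpace ℝ (Fin n) | f x ≤ c}) :
    Nonempty ((f ⁻¹' {c}) ≃ₜ (Metric.sphere (0 : EuclideanSpace ℝ (Fin n)) 1)) :=
  convex_level_set_homeomorph_sphere_general n f hcont hconv p c hpc hcpt
end
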